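/- For every r₀ > 0 and m₀ > 0 there exists a constant C > 0 with the following property. Let (U, A, ν, R) with twist constant K be a smooth conformal solution on [τ₀,τ₁) with R ≥ r₀ and R_τ² − R_ξ² ≥ m₀ everywhere. Then for every τ ∈ [τ₀,τ₁), ∫₀^{2π} |ν_ξ(τ,ξ)| dξ + ∫₀^{2π} |ν_τ(τ,ξ)| dξ ≤ C ‖R‖_{C¹([τ₀,τ]×ℝ)} ( 𝓔_conf(τ) + ∫₀^{2π} |R_ξξ(τ,ξ)| dξ + ∫₀^{2π} |R_ξτ(τ,ξ)| dξ ), where ‖R‖_{C¹([τ₀,τ]×ℝ)} := sup over [τ₀,τ]×ℝ of (|R| + |R_τ| + |R_ξ|). -/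

import Mathlib

open Real

noncomputable section

/-- Partial derivative in the first (time) variable. -/
def pd1 (f : ℝ → ℝ → ℝ) (x y : ℝ) : ℝ := deriv (fun s => f s y) x

/-- Partial derivative in the second (space) variable. -/
def pd2 (f : ℝ → ℝ → ℝ) (x y : ℝ) : ℝ := deriv (fun s => f x s) y

/-- A smooth solution `(U, A, ν, R)` of the `T²`-symmetric vacuum Einstein equations
in conformal coordinates, with twist constant `K`, on the time set `D` (times `ℝ` in
the space variable `ξ`, with all coefficients `2π`-periodic in `ξ` and `R > 0`).
The equations are the constraints (C1), (C2) and the evolution equations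
(E1)–(E4) of the paper. -/
structure ConfSol (D : Set ℝ) (K : ℝ) where
  U : ℝ → ℝ → ℝ
  A : ℝ → ℝ → ℝ
  ν : ℝ → ℝ → ℝ
  R : ℝ → ℝ → ℝ
  smooth_U : ContDiff ℝ (⊤ : ℕ∞) (Function.uncurry U)
  smooth_A : ContDiff ℝ (⊤ : ℕ∞) (Function.uncurry A)
  smooth_ν : ContDiff ℝ (⊤ : ℕ∞) (Function.uncurry ν)
  smooth_R : ContDiff ℝ (⊤ : ℕ∞) (Function.uncurry R)
  periodic_U : ∀ τ ξ : ℝ, U τ (ξ + 2 * π) = U τ ξ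
  periodic_A : ∀ τ ξ : ℝ, A τ (ξ + 2 * π) = A τ ξ
  periodic_ν : ∀ τ ξ : ℝ, ν τ (ξ + 2 * π) = ν τ ξ
  periodic_R : ∀ τ ξ : ℝ, R τ (ξ + 2 * π) = R τ ξ
  Rpos : ∀ τ ∈ D, ∀ ξ : ℝ, 0 < R τ ξ
  constraint1 : ∀ τ ∈ D, ∀ ξ : ℝ,
    (pd1 U τ ξ) ^ 2 + (pd2 U τ ξ) ^ 2
      + exp (4 * U τ ξ) / (4 * (R τ ξ) ^ 2) * ((pd1 A τ ξ) ^ 2 + (pd2 A τ ξ) ^ 2)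
      + pd2 (pd2 R) τ ξ / R τ ξ
      - pd1 ν τ ξ * pd1 R τ ξ / R τ ξ
      - pd2 ν τ ξ * pd2 R τ ξ / R τ ξ
      + exp (2 * ν τ ξ) * K ^ 2 / (4 * (R τ ξ) ^ 4) = 0
  constraint2 : ∀ τ ∈ D, ∀ ξ : ℝ,
    2 * pd1 U τ ξ * pd2 U τ ξ
      + exp (4 * U τ ξ) / (2 * (R τ ξ) ^ 2) * (pd1 A τ ξ * pd2 A τ ξ)
      + pd1 (pd2 R) τ ξ / R τ ξ
      - pd2 ν τ ξ * pd1 R τ ξ / R τ ξ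
      - pd1 ν τ ξ * pd2 R τ ξ / R τ ξ = 0
  evol_U : ∀ τ ∈ D, ∀ ξ : ℝ,
    pd1 (pd1 U) τ ξ - pd2 (pd2 U) τ ξ
      = pd2 R τ ξ * pd2 U τ ξ / R τ ξ - pd1 R τ ξ * pd1 U τ ξ / R τ ξ
        + exp (4 * U τ ξ) / (2 * (R τ ξ) ^ 2) * ((pd1 A τ ξ) ^ 2 - (pd2 A τ ξ) ^ 2)
  evol_A : ∀ τ ∈ D, ∀ ξ : ℝ,
    pd1 (pd1 A) τ ξ - pd2 (pd2 A) τ ξ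
      = pd1 R τ ξ * pd1 A τ ξ / R τ ξ - pd2 R τ ξ * pd2 A τ ξ / R τ ξ
        + 4 * (pd2 A τ ξ * pd2 U τ ξ - pd1 A τ ξ * pd1 U τ ξ)
  evol_R : ∀ τ ∈ D, ∀ ξ : ℝ,
    pd1 (pd1 R) τ ξ - pd2 (pd2 R) τ ξ
      = exp (2 * ν τ ξ) * K ^ 2 / (2 * (R τ ξ) ^ 3)
  evol_ν : ∀ τ ∈ D, ∀ ξ : ℝ,
    pd1 (pd1 ν) τ ξ - pd2 (pd2 ν) τ ξ
      = (pd2 U τ ξ) ^ 2 - (pd1 U τ ξ) ^ 2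
        + exp (4 * U τ ξ) / (4 * (R τ ξ) ^ 2) * ((pd1 A τ ξ) ^ 2 - (pd2 A τ ξ) ^ 2)
        - 3 * exp (2 * ν τ ξ) * K ^ 2 / (4 * (R τ ξ) ^ 4)

/-- The conformal energy `𝓔_conf(τ)`. -/
def Econf (K : ℝ) (U A ν R : ℝ → ℝ → ℝ) (τ : ℝ) : ℝ :=
  ∫ ξ in (0:ℝ)..(2 * π),
    (R τ ξ * ((pd1 U τ ξ) ^ 2 + (pd2 U τ ξ) ^ 2)
      + exp (4 * U τ ξ) / (4 * R τ ξ) * ((pd1 A τ ξ) ^ 2 + (pd2 A τ ξ) ^ 2)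
      + exp (2 * ν τ ξ) * K ^ 2 / (4 * (R τ ξ) ^ 3))

/-- The sup of a function over the strip `[τ₀,τ] × ℝ`. -/
def supStrip (f : ℝ → ℝ → ℝ) (τ₀ τ : ℝ) : ℝ :=
  sSup ((fun p : ℝ × ℝ => f p.1 p.2) '' (Set.Icc τ₀ τ ×ˢ (Set.univ : Set ℝ)))

/-- The `C¹` norm `‖R‖_{C¹([τ₀,τ]×ℝ)} = sup (|R| + |R_τ| + |R_ξ|)`. -/
def C1norm (R : ℝ → ℝ → ℝ) (τ₀ τ : ℝ) : ℝ :=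
  supStrip (fun t x => |R t x| + |pd1 R t x| + |pd2 R t x|) τ₀ τ

/-- The `L²` norm on `[0,2π]`. -/
def L2n (f : ℝ → ℝ) : ℝ := Real.sqrt (∫ ξ in (0:ℝ)..(2 * π), (f ξ) ^ 2)

/-- The `L¹` norm on `[0,2π]`. -/
def L1n (f : ℝ → ℝ) : ℝ := ∫ ξ in (0:ℝ)..(2 * π), |f ξ|

/-- The `H¹` norm on `[0,2π]`. -/
def H1n (f : ℝ → ℝ) : ℝ := L2n f + L2n (deriv f)

/-- The `W^{1,1}` norm on `[0,2π]`. -/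
def W11n (f : ℝ → ℝ) : ℝ := L1n f + L1n (deriv f)

/-- The `W^{2,1}` norm on `[0,2π]`. -/
def W21n (f : ℝ → ℝ) : ℝ := L1n f + L1n (deriv f) + L1n (deriv (deriv f))

/-- The total norm `N(τ)` of a conformal solution. -/
def Nnorm (U A ν R : ℝ → ℝ → ℝ) (τ : ℝ) : ℝ :=
  H1n (U τ) + H1n (A τ)
    + L2n (fun ξ => pd1 U τ ξ) + L2n (fun ξ => pd1 A τ ξ)
    + W11n (ν τ) + L1n (fun ξ => pd1 ν τ ξ)
    + W21n (R τ) + W11n (fun ξ => pd1 R τ ξ)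
    + (⨆ ξ : ℝ, 1 / R τ ξ)
    + 1 / ((⨅ ξ : ℝ, (pd1 R τ ξ - pd2 R τ ξ)) * (⨅ ξ : ℝ, (pd1 R τ ξ + pd2 R τ ξ)))

end

/-!
Multiplied by `R`, the constraints (C1) and (C2) become the linear system
`ν_τ R_τ + ν_ξ R_ξ = e + R_ξξ`, `ν_ξ R_τ + ν_τ R_ξ = g + R_ξτ` for `(ν_τ, ν_ξ)`, where `e` is the
conformal energy density and the momentum density `g` satisfies `|g| ≤ e`. The determinant
`R_τ² - R_ξ²` is at least `m₀`, so Cramer's rule gives, pointwise,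
`|ν_τ| + |ν_ξ| ≤ 2/m₀ (|R_τ| + |R_ξ|) (e + |R_ξξ| + |R_ξτ|)`; integrating over a period yields the
estimate with `C = 2/m₀`.
-/

open Function intervalIntegral

section PartialDerivatives

variable {f : ℝ → ℝ → ℝ}

lemma pd1_eq_fderiv {x y : ℝ} (h : DifferentiableAt ℝ (uncurry f) (x, y)) :
    pd1 f x y = fderiv ℝ (uncurry f) (x, y) (1, 0) := by
  have hc : HasDerivAt (fun s : ℝ => (s, y)) ((1 : ℝ), (0 : ℝ)) x := by
    simpa using (hasDerivAt_id x).prodMk (hasDerivAt_const x y)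
  exact (h.hasFDerivAt.comp_hasDerivAt x hc).deriv

lemma pd2_eq_fderiv {x y : ℝ} (h : DifferentiableAt ℝ (uncurry f) (x, y)) :
    pd2 f x y = fderiv ℝ (uncurry f) (x, y) (0, 1) := by
  have hc : HasDerivAt (fun s : ℝ => (x, s)) ((0 : ℝ), (1 : ℝ)) y := by
    simpa using (hasDerivAt_const y x).prodMk (hasDerivAt_id y)
  exact (h.hasFDerivAt.comp_hasDerivAt y hc).deriv

lemma contDiff_uncurry_pd1 (h : ContDiff ℝ (⊤ : ℕ∞) (uncurry f)) :
    ContDiff ℝ (⊤ : ℕ∞) (uncurry (pd1 f)) := by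
  have he : uncurry (pd1 f) = fun p => fderiv ℝ (uncurry f) p (1, 0) :=
    funext fun p => pd1_eq_fderiv (h.differentiable (by simp) p)
  rw [he]
  exact (ContinuousLinearMap.apply ℝ ℝ ((1 : ℝ), (0 : ℝ))).contDiff.comp
    (h.fderiv_right (mod_cast le_top))

lemma contDiff_uncurry_pd2 (h : ContDiff ℝ (⊤ : ℕ∞) (uncurry f)) :
    ContDiff ℝ (⊤ : ℕ∞) (uncurry (pd2 f)) := by
  have he : uncurry (pd2 f) = fun p => fderiv ℝ (uncurry f) p (0, 1) :=
    funext fun p => pd2_eq_fderiv (h.differentiable (by simp) p)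
  rw [he]
  exact (ContinuousLinearMap.apply ℝ ℝ ((0 : ℝ), (1 : ℝ))).contDiff.comp
    (h.fderiv_right (mod_cast le_top))

lemma pd1_periodic {T : ℝ} (hf : ∀ t x, f t (x + T) = f t x) (t x : ℝ) :
    pd1 f t (x + T) = pd1 f t x := by
  simp only [pd1, hf]

lemma pd2_periodic {T : ℝ} (hf : ∀ t x, f t (x + T) = f t x) (t x : ℝ) :
    pd2 f t (x + T) = pd2 f t x := by
  have h : (fun y => f t (y + T)) = f t := funext (hf t)
  rw [pd2, ← deriv_comp_add_const, h, pd2]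

end PartialDerivatives

/-- Periodicity in `x` reduces the strip to a compact rectangle, on which `f` is bounded. -/
lemma le_supStrip {f : ℝ → ℝ → ℝ} {T τ₀ τ t : ℝ} (hf : Continuous (uncurry f)) (hT : 0 < T)
    (hper : ∀ t x, f t (x + T) = f t x) (ht : t ∈ Set.Icc τ₀ τ) (x : ℝ) :
    f t x ≤ supStrip f τ₀ τ := by
  have hsub : (fun p : ℝ × ℝ => f p.1 p.2) '' (Set.Icc τ₀ τ ×ˢ Set.univ)
      ⊆ (fun p : ℝ × ℝ => f p.1 p.2) '' (Set.Icc τ₀ τ ×ˢ Set.Icc 0 T) := by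
    rintro v ⟨⟨s, y⟩, ⟨hs, -⟩, rfl⟩
    obtain ⟨z, hz, hyz⟩ := (show Periodic (f s) T from hper s).exists_mem_Ico₀ hT y
    exact ⟨(s, z), ⟨hs, hz.1, hz.2.le⟩, hyz.symm⟩
  have hbdd := ((isCompact_Icc.prod isCompact_Icc).image hf).bddAbove.mono hsub
  exact le_csSup hbdd ⟨(t, x), ⟨ht, trivial⟩, rfl⟩

lemma abs_pd1_add_abs_pd2_le_C1norm {R : ℝ → ℝ → ℝ} {τ₀ τ t : ℝ}
    (hR : ContDiff ℝ (⊤ : ℕ∞) (uncurry R)) (hper : ∀ t x, R t (x + 2 * π) = R t x)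
    (ht : t ∈ Set.Icc τ₀ τ) (x : ℝ) :
    |pd1 R t x| + |pd2 R t x| ≤ C1norm R τ₀ τ := by
  have hcont : Continuous (uncurry fun t x => |R t x| + |pd1 R t x| + |pd2 R t x|) :=
    (hR.continuous.abs.add (contDiff_uncurry_pd1 hR).continuous.abs).add
      (contDiff_uncurry_pd2 hR).continuous.abs
  have h := le_supStrip hcont two_pi_pos
    (fun t x => by rw [hper, pd1_periodic hper, pd2_periodic hper]) ht x
  linarith [abs_nonneg (R t x), h, show supStrip _ τ₀ τ = C1norm R τ₀ τ from rfl]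

lemma abs_add_abs_le_of_linear_system {a b p q F G m : ℝ} (hm : 0 < m) (hab : m ≤ a ^ 2 - b ^ 2)
    (hF : p * a + q * b = F) (hG : q * a + p * b = G) :
    |p| + |q| ≤ (|a| + |b|) * (|F| + |G|) / m := by
  have hd : 0 < a ^ 2 - b ^ 2 := hm.trans_le hab
  have hp : (a ^ 2 - b ^ 2) * p = a * F - b * G := by rw [← hF, ← hG]; ring
  have hq : (a ^ 2 - b ^ 2) * q = a * G - b * F := by rw [← hF, ← hG]; ring
  have hsolve : (a ^ 2 - b ^ 2) * (|p| + |q|) ≤ (|a| + |b|) * (|F| + |G|) :=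
    calc (a ^ 2 - b ^ 2) * (|p| + |q|) = |a * F - b * G| + |a * G - b * F| := by
          rw [← hp, ← hq, abs_mul, abs_mul, abs_of_pos hd]; ring
      _ ≤ (|a * F| + |b * G|) + (|a * G| + |b * F|) := add_le_add (abs_sub _ _) (abs_sub _ _)
      _ = (|a| + |b|) * (|F| + |G|) := by simp only [abs_mul]; ring
  rw [le_div_iff₀ hm, mul_comm]
  exact (mul_le_mul_of_nonneg_right hab (by positivity)).trans hsolve

lemma integral_add_le_const_mul_integral_add {f₁ f₂ g₁ g₂ g₃ : ℝ → ℝ} {a b c : ℝ} (hab : a ≤ b)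
    (hf₁ : IntervalIntegrable f₁ MeasureTheory.volume a b)
    (hf₂ : IntervalIntegrable f₂ MeasureTheory.volume a b)
    (hg₁ : IntervalIntegrable g₁ MeasureTheory.volume a b)
    (hg₂ : IntervalIntegrable g₂ MeasureTheory.volume a b)
    (hg₃ : IntervalIntegrable g₃ MeasureTheory.volume a b)
    (h : ∀ x ∈ Set.Icc a b, f₁ x + f₂ x ≤ c * (g₁ x + g₂ x + g₃ x)) :
    (∫ x in a..b, f₁ x) + (∫ x in a..b, f₂ x)
      ≤ c * ((∫ x in a..b, g₁ x) + (∫ x in a..b, g₂ x) + (∫ x in a..b, g₃ x)) := by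
  rw [← integral_add hf₁ hf₂, ← integral_add hg₁ hg₂, ← integral_add (hg₁.add hg₂) hg₃,
    ← integral_const_mul]
  exact integral_mono_on hab (hf₁.add hf₂) (((hg₁.add hg₂).add hg₃).const_mul c) h

noncomputable section

def confEnergyDensity (K : ℝ) (U A ν R : ℝ → ℝ → ℝ) (τ ξ : ℝ) : ℝ :=
  R τ ξ * ((pd1 U τ ξ) ^ 2 + (pd2 U τ ξ) ^ 2)
    + exp (4 * U τ ξ) / (4 * R τ ξ) * ((pd1 A τ ξ) ^ 2 + (pd2 A τ ξ) ^ 2)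
    + exp (2 * ν τ ξ) * K ^ 2 / (4 * (R τ ξ) ^ 3)

def confMomentumDensity (U A R : ℝ → ℝ → ℝ) (τ ξ : ℝ) : ℝ :=
  R τ ξ * (2 * pd1 U τ ξ * pd2 U τ ξ)
    + exp (4 * U τ ξ) / (2 * R τ ξ) * (pd1 A τ ξ * pd2 A τ ξ)

end

lemma Econf_eq_integral_confEnergyDensity (K : ℝ) (U A ν R : ℝ → ℝ → ℝ) (τ : ℝ) :
    Econf K U A ν R τ = ∫ ξ in (0 : ℝ)..(2 * π), confEnergyDensity K U A ν R τ ξ :=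
  rfl

section Densities

variable {K : ℝ} {U A ν R : ℝ → ℝ → ℝ} {τ ξ : ℝ}

lemma confEnergyDensity_nonneg (hR : 0 < R τ ξ) : 0 ≤ confEnergyDensity K U A ν R τ ξ := by
  unfold confEnergyDensity
  positivity

/-- `2xy ≤ x² + y²` in each of the two wave-map components. -/
lemma abs_confMomentumDensity_le (hR : 0 < R τ ξ) :
    |confMomentumDensity U A R τ ξ| ≤ confEnergyDensity K U A ν R τ ξ := by
  set w := exp (4 * U τ ξ) / (4 * R τ ξ)
  have hw : 0 < w := by positivity
  have hmom : confMomentumDensity U A R τ ξ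
      = R τ ξ * (2 * pd1 U τ ξ * pd2 U τ ξ) + w * (2 * pd1 A τ ξ * pd2 A τ ξ) := by
    simp only [confMomentumDensity, w]
    field_simp
    ring
  have hK : 0 ≤ exp (2 * ν τ ξ) * K ^ 2 / (4 * (R τ ξ) ^ 3) := by positivity
  rw [hmom, abs_le]
  constructor <;>
  · simp only [confEnergyDensity]
    nlinarith [mul_nonneg hR.le (sq_nonneg (pd1 U τ ξ + pd2 U τ ξ)),
      mul_nonneg hR.le (sq_nonneg (pd1 U τ ξ - pd2 U τ ξ)),
      mul_nonneg hw.le (sq_nonneg (pd1 A τ ξ + pd2 A τ ξ)),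
      mul_nonneg hw.le (sq_nonneg (pd1 A τ ξ - pd2 A τ ξ))]

end Densities

namespace ConfSol

variable {D : Set ℝ} {K : ℝ} (S : ConfSol D K) {τ : ℝ}

lemma hamiltonian_constraint_eq (hτ : τ ∈ D) (ξ : ℝ) :
    pd1 S.ν τ ξ * pd1 S.R τ ξ + pd2 S.ν τ ξ * pd2 S.R τ ξ
      = confEnergyDensity K S.U S.A S.ν S.R τ ξ + pd2 (pd2 S.R) τ ξ := by
  have hR := (S.Rpos τ hτ ξ).ne'
  have h := S.constraint1 τ hτ ξ
  unfold confEnergyDensity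
  linear_combination (norm := (field_simp; ring)) (-S.R τ ξ) * h

lemma momentum_constraint_eq (hτ : τ ∈ D) (ξ : ℝ) :
    pd2 S.ν τ ξ * pd1 S.R τ ξ + pd1 S.ν τ ξ * pd2 S.R τ ξ
      = confMomentumDensity S.U S.A S.R τ ξ + pd1 (pd2 S.R) τ ξ := by
  have hR := (S.Rpos τ hτ ξ).ne'
  have h := S.constraint2 τ hτ ξ
  unfold confMomentumDensity
  linear_combination (norm := (field_simp; ring)) (-S.R τ ξ) * h

lemma abs_pd2_ν_add_abs_pd1_ν_le {m₀ : ℝ} (hm₀ : 0 < m₀) (hτ : τ ∈ D) {ξ : ℝ}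
    (hdet : m₀ ≤ (pd1 S.R τ ξ) ^ 2 - (pd2 S.R τ ξ) ^ 2) :
    |pd2 S.ν τ ξ| + |pd1 S.ν τ ξ|
      ≤ 2 / m₀ * (|pd1 S.R τ ξ| + |pd2 S.R τ ξ|) *
          (confEnergyDensity K S.U S.A S.ν S.R τ ξ + |pd2 (pd2 S.R) τ ξ| + |pd1 (pd2 S.R) τ ξ|) := by
  have hR := S.Rpos τ hτ ξ
  have he := confEnergyDensity_nonneg (K := K) (U := S.U) (A := S.A) (ν := S.ν) hR
  have hg := abs_confMomentumDensity_le (K := K) (U := S.U) (A := S.A) (ν := S.ν) hR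
  have hsys := abs_add_abs_le_of_linear_system hm₀ hdet
    (S.hamiltonian_constraint_eq hτ ξ) (S.momentum_constraint_eq hτ ξ)
  have hrhs : |confEnergyDensity K S.U S.A S.ν S.R τ ξ + pd2 (pd2 S.R) τ ξ|
      + |confMomentumDensity S.U S.A S.R τ ξ + pd1 (pd2 S.R) τ ξ|
      ≤ 2 * (confEnergyDensity K S.U S.A S.ν S.R τ ξ + |pd2 (pd2 S.R) τ ξ| + |pd1 (pd2 S.R) τ ξ|) := by
    linarith [abs_add_le (confEnergyDensity K S.U S.A S.ν S.R τ ξ) (pd2 (pd2 S.R) τ ξ),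
      abs_add_le (confMomentumDensity S.U S.A S.R τ ξ) (pd1 (pd2 S.R) τ ξ), abs_of_nonneg he,
      abs_nonneg (pd2 (pd2 S.R) τ ξ), abs_nonneg (pd1 (pd2 S.R) τ ξ)]
  calc |pd2 S.ν τ ξ| + |pd1 S.ν τ ξ| = |pd1 S.ν τ ξ| + |pd2 S.ν τ ξ| := add_comm _ _
    _ ≤ _ := hsys
    _ ≤ (|pd1 S.R τ ξ| + |pd2 S.R τ ξ|) * (2 * (confEnergyDensity K S.U S.A S.ν S.R τ ξ
          + |pd2 (pd2 S.R) τ ξ| + |pd1 (pd2 S.R) τ ξ|)) / m₀ := by gcongr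
    _ = _ := by ring

lemma continuous_confEnergyDensity (hτ : τ ∈ D) :
    Continuous (confEnergyDensity K S.U S.A S.ν S.R τ) := by
  have slice {f : ℝ → ℝ → ℝ} (hf : ContDiff ℝ (⊤ : ℕ∞) (uncurry f)) : Continuous (f τ) :=
    hf.continuous.uncurry_left τ
  have hU := slice S.smooth_U
  have hν := slice S.smooth_ν
  have hR := slice S.smooth_R
  have hU₁ := slice (contDiff_uncurry_pd1 S.smooth_U)
  have hU₂ := slice (contDiff_uncurry_pd2 S.smooth_U)
  have hA₁ := slice (contDiff_uncurry_pd1 S.smooth_A)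
  have hA₂ := slice (contDiff_uncurry_pd2 S.smooth_A)
  have hR₀ := fun ξ => (S.Rpos τ hτ ξ).ne'
  unfold confEnergyDensity
  fun_prop (disch := simp [hR₀])

end ConfSol

theorem nu_first_order_estimate_general (r₀ m₀ : ℝ) (hm₀ : 0 < m₀) :
    ∃ C : ℝ, 0 < C ∧
      ∀ (τ₀ τ₁ K : ℝ), τ₀ < τ₁ →
        ∀ S : ConfSol (Set.Ico τ₀ τ₁) K,
          (∀ τ ∈ Set.Ico τ₀ τ₁, ∀ ξ : ℝ, r₀ ≤ S.R τ ξ) →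
          (∀ τ ∈ Set.Ico τ₀ τ₁, ∀ ξ : ℝ,
            m₀ ≤ (pd1 S.R τ ξ) ^ 2 - (pd2 S.R τ ξ) ^ 2) →
          ∀ τ ∈ Set.Ico τ₀ τ₁,
            (∫ ξ in (0:ℝ)..(2 * Real.pi), |pd2 S.ν τ ξ|)
              + (∫ ξ in (0:ℝ)..(2 * Real.pi), |pd1 S.ν τ ξ|)
            ≤ C * C1norm S.R τ₀ τ *
                (Econf K S.U S.A S.ν S.R τ
                  + (∫ ξ in (0:ℝ)..(2 * Real.pi), |pd2 (pd2 S.R) τ ξ|)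
                  + (∫ ξ in (0:ℝ)..(2 * Real.pi), |pd1 (pd2 S.R) τ ξ|)) := by
  refine ⟨2 / m₀, by positivity, fun τ₀ τ₁ K _ S _ hdet τ hτ => ?_⟩
  have slice {f : ℝ → ℝ → ℝ} (hf : ContDiff ℝ (⊤ : ℕ∞) (uncurry f)) :
      IntervalIntegrable (fun ξ => |f τ ξ|) MeasureTheory.volume 0 (2 * π) :=
    (hf.continuous.uncurry_left τ).abs.intervalIntegrable _ _
  rw [Econf_eq_integral_confEnergyDensity]
  refine integral_add_le_const_mul_integral_add two_pi_pos.le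
    (slice (contDiff_uncurry_pd2 S.smooth_ν)) (slice (contDiff_uncurry_pd1 S.smooth_ν))
    ((S.continuous_confEnergyDensity hτ).intervalIntegrable _ _)
    (slice (contDiff_uncurry_pd2 (contDiff_uncurry_pd2 S.smooth_R)))
    (slice (contDiff_uncurry_pd1 (contDiff_uncurry_pd2 S.smooth_R))) fun ξ _ => ?_
  have he := confEnergyDensity_nonneg (K := K) (U := S.U) (A := S.A) (ν := S.ν) (S.Rpos τ hτ ξ)
  calc |pd2 S.ν τ ξ| + |pd1 S.ν τ ξ|
      ≤ 2 / m₀ * (|pd1 S.R τ ξ| + |pd2 S.R τ ξ|) * (confEnergyDensity K S.U S.A S.ν S.R τ ξ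
          + |pd2 (pd2 S.R) τ ξ| + |pd1 (pd2 S.R) τ ξ|) :=
        S.abs_pd2_ν_add_abs_pd1_ν_le hm₀ hτ (hdet τ hτ ξ)
    _ ≤ 2 / m₀ * C1norm S.R τ₀ τ * (confEnergyDensity K S.U S.A S.ν S.R τ ξ
          + |pd2 (pd2 S.R) τ ξ| + |pd1 (pd2 S.R) τ ξ|) := by
        gcongr
        exact abs_pd1_add_abs_pd2_le_C1norm S.smooth_R S.periodic_R ⟨hτ.1, le_rfl⟩ ξ

/-- **First-order `L¹` estimate on `ν` in conformal coordinates.**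
For every `r₀ > 0` and `m₀ > 0` there is `C > 0` such that any smooth conformal
solution with `R ≥ r₀` and `R_τ² − R_ξ² ≥ m₀` satisfies
`∫|ν_ξ| + ∫|ν_τ| ≤ C ‖R‖_{C¹} (𝓔_conf(τ) + ∫|R_ξξ| + ∫|R_ξτ|)`. -/
theorem nu_first_order_estimate (r₀ m₀ : ℝ) (hr₀ : 0 < r₀) (hm₀ : 0 < m₀) :
    ∃ C : ℝ, 0 < C ∧
      ∀ (τ₀ τ₁ K : ℝ), τ₀ < τ₁ →
        ∀ S : ConfSol (Set.Ico τ₀ τ₁) K,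
          (∀ τ ∈ Set.Ico τ₀ τ₁, ∀ ξ : ℝ, r₀ ≤ S.R τ ξ) →
          (∀ τ ∈ Set.Ico τ₀ τ₁, ∀ ξ : ℝ,
            m₀ ≤ (pd1 S.R τ ξ) ^ 2 - (pd2 S.R τ ξ) ^ 2) →
          ∀ τ ∈ Set.Ico τ₀ τ₁,
            (∫ ξ in (0:ℝ)..(2 * Real.pi), |pd2 S.ν τ ξ|)
              + (∫ ξ in (0:ℝ)..(2 * Real.pi), |pd1 S.ν τ ξ|)
            ≤ C * C1norm S.R τ₀ τ *
                (Econf K S.U S.A S.ν S.R τ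
                  + (∫ ξ in (0:ℝ)..(2 * Real.pi), |pd2 (pd2 S.R) τ ξ|)
                  + (∫ ξ in (0:ℝ)..(2 * Real.pi), |pd1 (pd2 S.R) τ ξ|)) :=
  nu_first_order_estimate_general r₀ m₀ hm₀
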